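/- Let G be a finite group. Then the Tate homology group Ĥ_0(G; (N,2) ⊗_ℤ I) is isomorphic to G^{ab} ⊗_ℤ ℤ/2 via the map sending g ⊗ 1 to the class of N ⊗ (g − 1). -/

import Mathlib

open TensorProduct

section Coinvariants
variable {G : Type*} [Group G] {V : Type*} [AddCommGroup V] [Module ℤ V]

/-- The norm map `v ↦ ∑ g • v` for a representation of a finite group. -/
noncomputable def normMap [Fintype G] (ρ : Representation ℤ G V) : V →ₗ[ℤ] V :=
  ∑ g : G, (ρ g : V →ₗ[ℤ] V)

/-- The submodule generated by the elements `g • v - v`, so that the quotient of `V` by it is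
the module of coinvariants `ℤ ⊗_{ℤG} V`. -/
def coinvRel (ρ : Representation ℤ G V) : Submodule ℤ V :=
  Submodule.span ℤ (Set.range fun p : G × V => ρ p.1 p.2 - p.2)

/-- The coinvariants `ℤ ⊗_{ℤG} V` of a representation. -/
abbrev Coinv (ρ : Representation ℤ G V) : Type _ := V ⧸ coinvRel ρ

lemma coinvRel_le [Fintype G] (ρ : Representation ℤ G V) :
    coinvRel ρ ≤ LinearMap.ker (normMap ρ) := by
  rw [coinvRel, Submodule.span_le]
  rintro x ⟨⟨g, v⟩, rfl⟩
  have key : (normMap ρ) ((ρ g) v) = (normMap ρ) v := by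
    simp only [normMap, LinearMap.sum_apply]
    calc ∑ h : G, (ρ h) ((ρ g) v)
        = ∑ h : G, (ρ (h * g)) v := by
          refine Finset.sum_congr rfl fun h _ => ?_
          rw [map_mul]; rfl
      _ = ∑ h : G, (ρ h) v :=
          Fintype.sum_bijective (· * g) (Group.mulRight_bijective g) _ _ fun x => rfl
  simp only [SetLike.mem_coe, LinearMap.mem_ker, map_sub, key, sub_self]

/-- The norm map `ℤ ⊗_{ℤG} V → V`, `1 ⊗ v ↦ ∑ g • v`, induced on the coinvariants.  Its kernel
is the Tate homology group `Ĥ₀(G; V)` (the codomain restriction to the invariants `V^G` does not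
change the kernel). -/
noncomputable def normBar [Fintype G] (ρ : Representation ℤ G V) :
    @LinearMap ℤ ℤ _ _ (RingHom.id ℤ) (Coinv ρ) V _ _ (Submodule.Quotient.module (coinvRel ρ)) _ :=
  Submodule.liftQ (coinvRel ρ) (normMap ρ) (coinvRel_le ρ)

end Coinvariants

section SubQuot
variable {G : Type*} [Group G] {V : Type*} [AddCommGroup V] [Module ℤ V]

/-- The restriction of a representation to an invariant submodule. -/
def subRep (ρ : Representation ℤ G V) (p : Submodule ℤ V)
    (hp : ∀ g : G, ∀ x ∈ p, ρ g x ∈ p) : Representation ℤ G p where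
  toFun g := (ρ g).restrict (hp g)
  map_one' := by
    ext x
    simp [LinearMap.restrict_apply]
  map_mul' g h := by
    ext x
    simp [LinearMap.restrict_apply, map_mul]

/-- The representation induced on the quotient by an invariant submodule. -/
noncomputable def quotRep (ρ : Representation ℤ G V) (p : Submodule ℤ V)
    (hp : ∀ g : G, ∀ x ∈ p, ρ g x ∈ p) : Representation ℤ G (V ⧸ p) where
  toFun g := Submodule.mapQ p p (ρ g) (hp g)
  map_one' := by
    apply LinearMap.ext
    intro x
    obtain ⟨v, rfl⟩ := Submodule.Quotient.mk_surjective p x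
    simp [Submodule.mapQ_apply]
  map_mul' g h := by
    apply LinearMap.ext
    intro x
    obtain ⟨v, rfl⟩ := Submodule.Quotient.mk_surjective p x
    simp [Submodule.mapQ_apply, map_mul]

end SubQuot

section GroupRing
variable (G : Type*) [Group G]

/-- The left regular representation of `G` on the group ring `ℤG`. -/
noncomputable def regRep : Representation ℤ G (MonoidAlgebra ℤ G) where
  toFun g := LinearMap.mulLeft ℤ (MonoidAlgebra.of ℤ G g)
  map_one' := by
    apply LinearMap.ext; intro x
    simp [MonoidAlgebra.of_apply, ← MonoidAlgebra.one_def]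
  map_mul' g h := by
    apply LinearMap.ext; intro x
    simp only [MonoidAlgebra.of_apply, LinearMap.mulLeft_apply, Module.End.mul_apply]
    rw [← mul_assoc, MonoidAlgebra.single_mul_single, mul_one]

/-- The augmentation map `ε : ℤG → ℤ`. -/
noncomputable def aug : MonoidAlgebra ℤ G →ₐ[ℤ] ℤ := MonoidAlgebra.lift ℤ ℤ G 1

/-- The augmentation ideal `I = ker(ε : ℤG → ℤ)`. -/
noncomputable def augI : Ideal (MonoidAlgebra ℤ G) := RingHom.ker (aug G).toRingHom

/-- The mod 2 augmentation map `ℤG → ℤ/2`. -/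
noncomputable def aug2 : MonoidAlgebra ℤ G →+* ZMod 2 :=
  (Int.castRingHom (ZMod 2)).comp (aug G).toRingHom

/-- The ideal `(I, 2) = ker(ℤG → ℤ/2)` generated by the augmentation ideal and `2`. -/
noncomputable def I2 : Ideal (MonoidAlgebra ℤ G) := RingHom.ker (aug2 G)

/-- The norm element `N = ∑_{g ∈ G} g ∈ ℤG`. -/
noncomputable def Nelt [Fintype G] : MonoidAlgebra ℤ G := ∑ g : G, MonoidAlgebra.of ℤ G g

/-- The (left) ideal of `ℤG` generated by the norm element `N`; the quotient by it is `ℤG/N`. -/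
noncomputable def NIdeal [Fintype G] : Ideal (MonoidAlgebra ℤ G) := Ideal.span {Nelt G}

/-- The left ideal `(N, 2)` of `ℤG` generated by the norm element `N` and `2`. -/
noncomputable def N2 [Fintype G] : Ideal (MonoidAlgebra ℤ G) := Ideal.span {Nelt G, 2}

lemma aug_single (g : G) : aug G (MonoidAlgebra.single g 1) = 1 := by
  simp [aug, MonoidAlgebra.lift_single]

lemma of_sub_one_mem_augI (g : G) :
    MonoidAlgebra.of ℤ G g - 1 ∈ (augI G).restrictScalars ℤ := by
  simp [augI, RingHom.mem_ker, map_sub, aug_single]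

lemma of_sub_one_mem_I2 (g : G) :
    MonoidAlgebra.of ℤ G g - 1 ∈ (I2 G).restrictScalars ℤ := by
  simp [I2, aug2, RingHom.mem_ker, map_sub, aug_single]

lemma two_mem_I2 : (2 : MonoidAlgebra ℤ G) ∈ (I2 G).restrictScalars ℤ := by
  have : (aug2 G) 2 = 2 := by simp [map_ofNat]
  simp [I2, RingHom.mem_ker, this]
  decide

lemma N_mem_I2 [Fintype G] (h : Even (Fintype.card G)) :
    Nelt G ∈ (I2 G).restrictScalars ℤ := by
  have : (aug2 G) (Nelt G) = (Fintype.card G : ZMod 2) := by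
    simp [Nelt, map_sum, aug2, aug_single]
  simp only [Submodule.restrictScalars_mem, I2, RingHom.mem_ker, this]
  rw [ZMod.natCast_eq_zero_iff]
  exact h.two_dvd

lemma N_mem_N2 [Fintype G] : Nelt G ∈ (N2 G).restrictScalars ℤ :=
  Ideal.subset_span (by simp)

lemma two_mem_N2 [Fintype G] : (2 : MonoidAlgebra ℤ G) ∈ (N2 G).restrictScalars ℤ :=
  Ideal.subset_span (by simp)

lemma ideal_invariant (J : Ideal (MonoidAlgebra ℤ G)) :
    ∀ g : G, ∀ x ∈ J.restrictScalars ℤ, (regRep G) g x ∈ J.restrictScalars ℤ := by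
  intro g x hx
  exact J.mul_mem_left _ hx

/-- A (left) ideal of `ℤG`, regarded as a representation of `G`. -/
noncomputable def idealRep (J : Ideal (MonoidAlgebra ℤ G)) :
    Representation ℤ G ↥(J.restrictScalars ℤ) :=
  subRep (regRep G) (J.restrictScalars ℤ) (ideal_invariant G J)

/-- The quotient `ℤG/N` of `ℤG` by the ideal generated by the norm element, as a
representation of `G`. -/
noncomputable def quotNRep [Fintype G] :
    Representation ℤ G (MonoidAlgebra ℤ G ⧸ (NIdeal G).restrictScalars ℤ) :=
  quotRep (regRep G) ((NIdeal G).restrictScalars ℤ) (ideal_invariant G (NIdeal G))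

/-- `2` as an element of `(I,2)`. -/
noncomputable def twoI2 : ↥((I2 G).restrictScalars ℤ) := ⟨2, two_mem_I2 G⟩

/-- `g - 1` as an element of `(I,2)`. -/
noncomputable def gm1 (g : G) : ↥((I2 G).restrictScalars ℤ) :=
  ⟨MonoidAlgebra.of ℤ G g - 1, of_sub_one_mem_I2 G g⟩

/-- `g - 1` as an element of the augmentation ideal `I`. -/
noncomputable def gm1I (g : G) : ↥((augI G).restrictScalars ℤ) :=
  ⟨MonoidAlgebra.of ℤ G g - 1, of_sub_one_mem_augI G g⟩

/-- The norm element as an element of `(I,2)` (for `G` of even order). -/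
noncomputable def NeltI2 [Fintype G] (h : Even (Fintype.card G)) :
    ↥((I2 G).restrictScalars ℤ) := ⟨Nelt G, N_mem_I2 G h⟩

/-- The norm element as an element of `(N,2)`. -/
noncomputable def NeltN2 [Fintype G] : ↥((N2 G).restrictScalars ℤ) := ⟨Nelt G, N_mem_N2 G⟩

end GroupRing

/-!
Every class in the coinvariants of `(N,2) ⊗ I` has the form `[N ⊗ b] + [2 ⊗ c]`: the ideal
`(N,2)` is spanned over `ℤ` by `N` and the elements `2g`, and `[2g ⊗ b] = [2 ⊗ g⁻¹b]`. The norm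
kills `[N ⊗ b]` because `N b = 0` for `b ∈ I`, while the norm of `[2 ⊗ c]` is `∑ 2g ⊗ gc`, from
which `2c` is recovered by `a ⊗ b ↦ a₁ b`. Hence `Ĥ₀` consists of the classes `[N ⊗ b]`.
The map `g ↦ [N ⊗ (g - 1)]` is a homomorphism killed by `2` (as `2N = ∑ 2g`), so it induces
`G^{ab} ⊗ ℤ/2 → Ĥ₀`. Its inverse is induced by `a ⊗ b ↦ [b] ⊗ (a₁ mod 2)`, which is
`G`-invariant because all coefficients of an element of `(N,2)` are congruent mod 2.
-/

open MonoidAlgebra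

section Coinvariants

variable {G V : Type*} [Group G] [AddCommGroup V] [Module ℤ V] (ρ : Representation ℤ G V)

lemma coinv_mk_apply (g : G) (v : V) :
    (Submodule.Quotient.mk (ρ g v) : Coinv ρ) = Submodule.Quotient.mk v :=
  (Submodule.Quotient.eq _).2 (Submodule.subset_span ⟨(g, v), rfl⟩)

lemma coinvRel_le_ker {U : Type*} [AddCommGroup U] [Module ℤ U] (f : V →ₗ[ℤ] U)
    (hf : ∀ g v, f (ρ g v) = f v) : coinvRel ρ ≤ LinearMap.ker f := by
  rw [coinvRel, Submodule.span_le]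
  rintro _ ⟨⟨g, v⟩, rfl⟩
  simp [hf]

lemma normBar_mk [Fintype G] (v : V) :
    normBar ρ (Submodule.Quotient.mk v) = ∑ g, ρ g v := by
  simp [normBar, normMap]

end Coinvariants

section IdealTensor

variable {G : Type*} [Group G] (J J' : Ideal ℤ[G])

lemma idealRep_coe (g : G) (x : J.restrictScalars ℤ) :
    ((idealRep G J g x : J.restrictScalars ℤ) : ℤ[G]) = of ℤ G g * x := rfl

lemma coinv_mk_idealRep_tmul (g : G) (x : J.restrictScalars ℤ) (y : J'.restrictScalars ℤ) :
    (Submodule.Quotient.mk (idealRep G J g x ⊗ₜ y) :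
        Coinv ((idealRep G J).tprod (idealRep G J'))) =
      Submodule.Quotient.mk (x ⊗ₜ idealRep G J' g⁻¹ y) := by
  have h : idealRep G J g x ⊗ₜ y =
      (idealRep G J).tprod (idealRep G J') g (x ⊗ₜ idealRep G J' g⁻¹ y) := by
    rw [Representation.tprod_apply, map_tmul, Representation.self_inv_apply]
  rw [h, coinv_mk_apply]

end IdealTensor

section ZModTensor

variable {A B : Type*} [AddCommGroup A] [AddCommGroup B]

lemma tmul_intCast (n : ℕ) (a : A) (k : ℤ) :
    a ⊗ₜ[ℤ] (k : ZMod n) = k • (a ⊗ₜ[ℤ] (1 : ZMod n)) := by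
  rw [← tmul_smul, zsmul_one]

noncomputable def liftTensorZMod (n : ℕ) (f : A →+ B) (hf : ∀ a, (n : ℤ) • f a = 0) :
    A ⊗[ℤ] ZMod n →+ B :=
  liftAddHom
    { toFun a := ZMod.lift n ⟨zmultiplesHom B (f a), by simpa using hf a⟩
      map_zero' := by
        ext c; obtain ⟨m, rfl⟩ := ZMod.intCast_surjective c; simp [ZMod.lift_coe]
      map_add' a a' := by
        ext c; obtain ⟨m, rfl⟩ := ZMod.intCast_surjective c; simp [ZMod.lift_coe] }
    (fun k a c => by
      obtain ⟨m, rfl⟩ := ZMod.intCast_surjective c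
      simp [ZMod.lift_coe, ← Int.cast_mul, smul_smul, mul_comm])

lemma liftTensorZMod_tmul_one (n : ℕ) (f : A →+ B) (hf : ∀ a, (n : ℤ) • f a = 0) (a : A) :
    liftTensorZMod n f hf (a ⊗ₜ 1) = f a := by
  simpa [liftTensorZMod] using ZMod.lift_coe n ⟨zmultiplesHom B (f a), by simpa using hf a⟩ 1

end ZModTensor

section GroupRingMaps

variable {G : Type*} [Group G]

lemma ofMul_abelianization_of_surjective :
    Function.Surjective fun g : G => Additive.ofMul (Abelianization.of g) :=
  QuotientGroup.mk_surjective

noncomputable def toAbLinear : ℤ[G] →ₗ[ℤ] Additive (Abelianization G) :=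
  (MonoidAlgebra.basis G ℤ).constr ℤ fun g => Additive.ofMul (Abelianization.of g)

lemma toAbLinear_of (g : G) : toAbLinear (of ℤ G g) = Additive.ofMul (Abelianization.of g) :=
  (MonoidAlgebra.basis G ℤ).constr_basis ℤ _ g

lemma toAbLinear_of_mul (g : G) (x : ℤ[G]) :
    toAbLinear (of ℤ G g * x) = toAbLinear x + aug G x • Additive.ofMul (Abelianization.of g) := by
  induction x using MonoidAlgebra.induction_on with
  | of h =>
    rw [← map_mul, toAbLinear_of, toAbLinear_of, of_apply, aug_single, one_smul, map_mul,
      ofMul_mul, add_comm]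
  | add x y hx hy => rw [mul_add, map_add, hx, hy, map_add, map_add, add_smul]; abel
  | smul n x hx =>
    rw [mul_smul_comm, map_zsmul, hx, map_zsmul, map_zsmul, smul_add, smul_smul, smul_eq_mul]

lemma toAbLinear_idealRep_augI (g : G) (b : (augI G).restrictScalars ℤ) :
    toAbLinear (idealRep G (augI G) g b : ℤ[G]) = toAbLinear (b : ℤ[G]) := by
  rw [idealRep_coe, toAbLinear_of_mul, show aug G b = 0 from b.2, zero_smul, add_zero]

lemma toAbLinear_gm1I (g : G) :
    toAbLinear (gm1I G g : ℤ[G]) = Additive.ofMul (Abelianization.of g) := by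
  rw [gm1I, map_sub, ← map_one (of ℤ G), toAbLinear_of, toAbLinear_of, map_one, ofMul_one,
    sub_zero]

noncomputable def coeffOneLinear : ℤ[G] →ₗ[ℤ] ℤ :=
  Finsupp.lapply 1 ∘ₗ (coeffLinearEquiv ℤ).toLinearMap

noncomputable def coeffOneModTwo : ℤ[G] →ₗ[ℤ] ZMod 2 :=
  (Int.castAddHom (ZMod 2)).toIntLinearMap ∘ₗ coeffOneLinear

lemma coeffOneModTwo_apply (x : ℤ[G]) : coeffOneModTwo x = (x.coeff 1 : ZMod 2) := rfl

end GroupRingMaps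

section NormElement

variable {G : Type*} [Group G] [Fintype G]

lemma Nelt_coeff (x : G) : (Nelt G).coeff x = 1 := by
  classical
  simp [Nelt, coeff_sum, of_apply]

lemma of_mul_Nelt (g : G) : of ℤ G g * Nelt G = Nelt G := by
  simp only [Nelt, Finset.mul_sum, ← map_mul]
  exact Equiv.sum_comp (Equiv.mulLeft g) (of ℤ G)

lemma Nelt_mul_of (g : G) : Nelt G * of ℤ G g = Nelt G := by
  simp only [Nelt, Finset.sum_mul, ← map_mul]
  exact Equiv.sum_comp (Equiv.mulRight g) (of ℤ G)

lemma sum_coeff_smul_of (x : ℤ[G]) : ∑ g, x.coeff g • of ℤ G g = x :=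
  (MonoidAlgebra.basis G ℤ).sum_repr x

lemma aug_eq_sum_coeff (x : ℤ[G]) : aug G x = ∑ g, x.coeff g := by
  conv_lhs => rw [← sum_coeff_smul_of x]
  simp only [map_sum, map_zsmul, aug_single, smul_eq_mul, mul_one, of_apply]

lemma mul_Nelt (x : ℤ[G]) : x * Nelt G = aug G x • Nelt G := by
  induction x using MonoidAlgebra.induction_on with
  | of g => rw [of_mul_Nelt, of_apply, aug_single, one_smul]
  | add x y hx hy => rw [add_mul, hx, hy, map_add, add_smul]
  | smul n x hx => rw [smul_mul_assoc, hx, map_zsmul, smul_smul, smul_eq_mul]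

lemma Nelt_mul (x : ℤ[G]) : Nelt G * x = aug G x • Nelt G := by
  induction x using MonoidAlgebra.induction_on with
  | of g => rw [Nelt_mul_of, of_apply, aug_single, one_smul]
  | add x y hx hy => rw [mul_add, hx, hy, map_add, add_smul]
  | smul n x hx => rw [mul_smul_comm, hx, map_zsmul, smul_smul, smul_eq_mul]

lemma exists_eq_of_mem_N2 {a : ℤ[G]} (ha : a ∈ N2 G) :
    ∃ (n : ℤ) (y : ℤ[G]), a = n • Nelt G + y * 2 := by
  obtain ⟨u, v, rfl⟩ := Ideal.mem_span_pair.1 ha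
  exact ⟨aug G u, v, by rw [mul_Nelt]⟩

lemma intCast_coeff_eq_of_mem_N2 {a : ℤ[G]} (ha : a ∈ N2 G) (x y : G) :
    (a.coeff x : ZMod 2) = a.coeff y := by
  obtain ⟨n, v, rfl⟩ := exists_eq_of_mem_N2 ha
  have h : ∀ z, ((n • Nelt G + v * 2).coeff z : ZMod 2) = n := fun z => by
    rw [mul_two, coeff_add, coeff_add, Finsupp.add_apply, Finsupp.add_apply, coeff_smul_apply,
      Nelt_coeff, smul_eq_mul, mul_one]
    have h2 : (2 : ZMod 2) = 0 := rfl
    push_cast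
    linear_combination (v.coeff z : ZMod 2) * h2
  rw [h, h]

end NormElement

noncomputable def twoN2 (G : Type*) [Group G] [Fintype G] : (N2 G).restrictScalars ℤ :=
  ⟨2, two_mem_N2 G⟩

section Generators

variable {G : Type*} [Group G] [Fintype G]

lemma twoN2_coe : (twoN2 G : ℤ[G]) = 2 := rfl

lemma idealRep_NeltN2 (g : G) : idealRep G (N2 G) g (NeltN2 G) = NeltN2 G :=
  Subtype.ext (of_mul_Nelt g)

lemma sum_idealRep_augI (b : (augI G).restrictScalars ℤ) : ∑ g, idealRep G (augI G) g b = 0 := by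
  apply Subtype.ext
  simp only [Submodule.coe_sum, idealRep_coe, ← Finset.sum_mul]
  rw [← Nelt, Nelt_mul, show aug G b = 0 from b.2, zero_smul, ZeroMemClass.coe_zero]

lemma span_N2_eq_top : Submodule.span ℤ
    (insert (NeltN2 G) (Set.range fun g => idealRep G (N2 G) g (twoN2 G))) = ⊤ := by
  refine Submodule.eq_top_iff'.2 fun a => ?_
  obtain ⟨n, y, hy⟩ := exists_eq_of_mem_N2 a.2
  have ha : a = n • NeltN2 G + ∑ g, y.coeff g • idealRep G (N2 G) g (twoN2 G) := by
    apply Subtype.ext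
    simp only [hy, Submodule.coe_add, Submodule.coe_smul, Submodule.coe_sum, idealRep_coe]
    conv_lhs => rw [← sum_coeff_smul_of y, Finset.sum_mul]
    simp only [smul_mul_assoc]
    rfl
  rw [ha]
  exact add_mem (Submodule.smul_mem _ _ (Submodule.subset_span (Set.mem_insert _ _)))
    (sum_mem fun g _ => Submodule.smul_mem _ _
      (Submodule.subset_span (Set.mem_insert_of_mem _ ⟨g, rfl⟩)))

lemma span_gm1I_eq_top : Submodule.span ℤ (Set.range (gm1I G)) = ⊤ := by
  refine Submodule.eq_top_iff'.2 fun b => ?_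
  have hb : b = ∑ g, (b : ℤ[G]).coeff g • gm1I G g := by
    apply Subtype.ext
    have h0 : ∑ g, (b : ℤ[G]).coeff g = 0 := by
      rw [← aug_eq_sum_coeff]; exact b.2
    simp only [Submodule.coe_sum, Submodule.coe_smul, gm1I, smul_sub, Finset.sum_sub_distrib,
      ← Finset.sum_smul, h0, zero_smul, sub_zero]
    exact (sum_coeff_smul_of _).symm
  rw [hb]
  exact sum_mem fun g _ => Submodule.smul_mem _ _ (Submodule.subset_span ⟨g, rfl⟩)

end Generators

section TensorCoinvariants

variable (G : Type*) [Group G] [Fintype G]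

noncomputable abbrev tensorRep :
    Representation ℤ G ((N2 G).restrictScalars ℤ ⊗[ℤ] (augI G).restrictScalars ℤ) :=
  (idealRep G (N2 G)).tprod (idealRep G (augI G))

noncomputable def tensorToAbTensor :
    (N2 G).restrictScalars ℤ ⊗[ℤ] (augI G).restrictScalars ℤ →ₗ[ℤ]
      Additive (Abelianization G) ⊗[ℤ] ZMod 2 :=
  TensorProduct.map (toAbLinear ∘ₗ Submodule.subtype _) (coeffOneModTwo ∘ₗ Submodule.subtype _) ∘ₗ
    (TensorProduct.comm ℤ _ _).toLinearMap

variable {G}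

lemma tensorRep_tmul (g : G) (a : (N2 G).restrictScalars ℤ) (b : (augI G).restrictScalars ℤ) :
    tensorRep G g (a ⊗ₜ b) = idealRep G (N2 G) g a ⊗ₜ idealRep G (augI G) g b := rfl

lemma tensorToAbTensor_tmul (a : (N2 G).restrictScalars ℤ) (b : (augI G).restrictScalars ℤ) :
    tensorToAbTensor G (a ⊗ₜ b) = toAbLinear (b : ℤ[G]) ⊗ₜ coeffOneModTwo (a : ℤ[G]) := rfl

lemma coeffOneModTwo_idealRep_N2 (g : G) (a : (N2 G).restrictScalars ℤ) :
    coeffOneModTwo (idealRep G (N2 G) g a : ℤ[G]) = coeffOneModTwo (a : ℤ[G]) := by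
  rw [coeffOneModTwo_apply, coeffOneModTwo_apply, idealRep_coe, of_apply, coeff_single_mul_apply,
    one_mul, mul_one]
  exact intCast_coeff_eq_of_mem_N2 a.2 _ _

lemma tensorToAbTensor_tensorRep (g : G)
    (m : (N2 G).restrictScalars ℤ ⊗[ℤ] (augI G).restrictScalars ℤ) :
    tensorToAbTensor G (tensorRep G g m) = tensorToAbTensor G m := by
  induction m with
  | zero => rw [map_zero, map_zero]
  | add m m' hm hm' => rw [map_add, map_add, hm, hm', map_add]
  | tmul a b =>
    rw [tensorRep_tmul, tensorToAbTensor_tmul, tensorToAbTensor_tmul, toAbLinear_idealRep_augI,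
      coeffOneModTwo_idealRep_N2]

noncomputable def coinvToAbTensor :
    Coinv (tensorRep G) →ₗ[ℤ] Additive (Abelianization G) ⊗[ℤ] ZMod 2 :=
  (coinvRel (tensorRep G)).liftQ (tensorToAbTensor G)
    (coinvRel_le_ker _ _ tensorToAbTensor_tensorRep)

lemma coinvToAbTensor_mk (m : (N2 G).restrictScalars ℤ ⊗[ℤ] (augI G).restrictScalars ℤ) :
    coinvToAbTensor (Submodule.Quotient.mk m) = tensorToAbTensor G m := rfl

end TensorCoinvariants

section NormClasses

variable {G : Type*} [Group G] [Fintype G]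

noncomputable def normTmul : (augI G).restrictScalars ℤ →ₗ[ℤ] Coinv (tensorRep G) :=
  (coinvRel (tensorRep G)).mkQ ∘ₗ TensorProduct.mk ℤ _ _ (NeltN2 G)

noncomputable def twoTmul : (augI G).restrictScalars ℤ →ₗ[ℤ] Coinv (tensorRep G) :=
  (coinvRel (tensorRep G)).mkQ ∘ₗ TensorProduct.mk ℤ _ _ (twoN2 G)

lemma normTmul_apply (b : (augI G).restrictScalars ℤ) :
    normTmul b = Submodule.Quotient.mk (NeltN2 G ⊗ₜ b) := rfl

lemma twoTmul_apply (c : (augI G).restrictScalars ℤ) :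
    twoTmul c = Submodule.Quotient.mk (twoN2 G ⊗ₜ c) := rfl

lemma normTmul_idealRep (g : G) (b : (augI G).restrictScalars ℤ) :
    normTmul (idealRep G (augI G) g b) = normTmul b := by
  rw [normTmul_apply, ← idealRep_NeltN2 g, ← tensorRep_tmul, coinv_mk_apply, normTmul_apply]

lemma mk_idealRep_twoN2_tmul (g : G) (b : (augI G).restrictScalars ℤ) :
    (Submodule.Quotient.mk (idealRep G (N2 G) g (twoN2 G) ⊗ₜ b) : Coinv (tensorRep G)) =
      twoTmul (idealRep G (augI G) g⁻¹ b) :=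
  coinv_mk_idealRep_tmul _ _ g _ b

lemma two_smul_NeltN2 : (2 : ℤ) • NeltN2 G = ∑ g, idealRep G (N2 G) g (twoN2 G) := by
  apply Subtype.ext
  simp only [Submodule.coe_smul, Submodule.coe_sum, idealRep_coe, ← Finset.sum_mul]
  rw [← Nelt]
  exact (two_smul ℤ _).trans (mul_two _).symm

lemma two_smul_normTmul (b : (augI G).restrictScalars ℤ) : (2 : ℤ) • normTmul b = 0 := by
  rw [normTmul_apply, ← Submodule.Quotient.mk_smul, smul_tmul', two_smul_NeltN2, sum_tmul,
    ← Submodule.mkQ_apply, map_sum]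
  simp only [Submodule.mkQ_apply, mk_idealRep_twoN2_tmul]
  rw [← map_sum, Fintype.sum_equiv (Equiv.inv G) (fun g => idealRep G (augI G) g⁻¹ b)
    (fun g => idealRep G (augI G) g b) fun _ => rfl, sum_idealRep_augI, map_zero]

lemma mk_tmul_mem_sup (a : (N2 G).restrictScalars ℤ) (b : (augI G).restrictScalars ℤ) :
    (Submodule.Quotient.mk (a ⊗ₜ b) : Coinv (tensorRep G)) ∈
      LinearMap.range normTmul ⊔ LinearMap.range twoTmul := by
  have key : Submodule.span ℤ
      (insert (NeltN2 G) (Set.range fun g => idealRep G (N2 G) g (twoN2 G))) ≤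
        (LinearMap.range normTmul ⊔ LinearMap.range twoTmul).comap
          ((coinvRel (tensorRep G)).mkQ ∘ₗ (TensorProduct.mk ℤ _ _).flip b) := by
    rw [Submodule.span_le]
    rintro _ (rfl | ⟨g, rfl⟩)
    · exact Submodule.mem_sup_left ⟨b, rfl⟩
    · exact Submodule.mem_sup_right ⟨_, (mk_idealRep_twoN2_tmul g b).symm⟩
  exact key (by rw [span_N2_eq_top]; exact Submodule.mem_top)

lemma range_normTmul_sup_range_twoTmul :
    LinearMap.range normTmul ⊔ LinearMap.range twoTmul = (⊤ : Submodule ℤ (Coinv (tensorRep G))) := by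
  refine Submodule.eq_top_iff'.2 fun q => ?_
  obtain ⟨m, rfl⟩ := Submodule.Quotient.mk_surjective _ q
  induction m with
  | zero => exact zero_mem _
  | add m m' hm hm' => exact add_mem hm hm'
  | tmul a b => exact mk_tmul_mem_sup a b

end NormClasses

section Kernel

variable {G : Type*} [Group G] [Fintype G]

noncomputable def coeffOneSmul :
    (N2 G).restrictScalars ℤ ⊗[ℤ] (augI G).restrictScalars ℤ →ₗ[ℤ] ℤ[G] :=
  TensorProduct.lift ((LinearMap.lsmul ℤ ℤ[G]).compl₁₂
    (coeffOneLinear ∘ₗ Submodule.subtype _) (Submodule.subtype _))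

lemma coeffOneSmul_tmul (a : (N2 G).restrictScalars ℤ) (b : (augI G).restrictScalars ℤ) :
    coeffOneSmul (a ⊗ₜ b) = (a : ℤ[G]).coeff 1 • (b : ℤ[G]) := rfl

lemma normBar_normTmul (b : (augI G).restrictScalars ℤ) :
    normBar (tensorRep G) (normTmul b) = 0 := by
  simp only [normTmul_apply, normBar_mk, tensorRep_tmul, idealRep_NeltN2]
  rw [← tmul_sum, sum_idealRep_augI, tmul_zero]

lemma coeffOneSmul_normBar_twoTmul (c : (augI G).restrictScalars ℤ) :
    coeffOneSmul (normBar (tensorRep G) (twoTmul c)) = (2 : ℤ) • (c : ℤ[G]) := by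
  classical
  have hcoeff : ∀ g : G, (of ℤ G g * 2).coeff 1 = if g = 1 then 2 else 0 := fun g => by
    rw [mul_two, ← two_smul ℤ, coeff_smul_apply, of_apply, coeff_single, Finsupp.single_apply]
    split_ifs <;> rfl
  simp only [twoTmul_apply, normBar_mk, tensorRep_tmul, map_sum, coeffOneSmul_tmul, idealRep_coe,
    twoN2_coe, hcoeff, ite_smul, zero_smul, Finset.sum_ite_eq', Finset.mem_univ, if_true, map_one,
    one_mul]

lemma eq_zero_of_normBar_twoTmul {c : (augI G).restrictScalars ℤ}
    (h : normBar (tensorRep G) (twoTmul c) = 0) : c = 0 := by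
  have h2 := coeffOneSmul_normBar_twoTmul c
  rw [h, map_zero] at h2
  refine Subtype.ext (MonoidAlgebra.ext (Finsupp.ext fun x => ?_))
  have hx : (2 : ℤ) * (c : ℤ[G]).coeff x = 0 := (congrArg (fun y : ℤ[G] => y.coeff x) h2).symm
  simpa using hx

lemma ker_normBar : LinearMap.ker (normBar (tensorRep G)) = LinearMap.range normTmul := by
  refine le_antisymm (fun q hq => ?_) ?_
  · have hq' : q ∈ LinearMap.range normTmul ⊔ LinearMap.range twoTmul := by
      rw [range_normTmul_sup_range_twoTmul]; exact Submodule.mem_top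
    obtain ⟨_, ⟨b, rfl⟩, _, ⟨c, rfl⟩, rfl⟩ := Submodule.mem_sup.1 hq'
    have hc : c = 0 := eq_zero_of_normBar_twoTmul (by
      rwa [LinearMap.mem_ker, map_add, normBar_normTmul, zero_add] at hq)
    rw [hc, map_zero, add_zero]
    exact ⟨b, rfl⟩
  · rintro _ ⟨b, rfl⟩
    exact normBar_normTmul b

end Kernel

section Inverse

variable {G : Type*} [Group G] [Fintype G]

lemma normTmul_gm1I_mul (g h : G) :
    normTmul (gm1I G (g * h)) = normTmul (gm1I G g) + normTmul (gm1I G h) := by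
  have : gm1I G (g * h) = idealRep G (augI G) g (gm1I G h) + gm1I G g := by
    apply Subtype.ext
    simp only [gm1I, Submodule.coe_add, idealRep_coe, map_mul]
    noncomm_ring
  rw [this, map_add, normTmul_idealRep, add_comm]

noncomputable def abToCoinv : Additive (Abelianization G) →+ Coinv (tensorRep G) :=
  MonoidHom.toAdditiveLeft <| Abelianization.lift <|
    MonoidHom.mk' (fun g => Multiplicative.ofAdd (normTmul (gm1I G g))) normTmul_gm1I_mul

lemma abToCoinv_of (g : G) :
    abToCoinv (Additive.ofMul (Abelianization.of g)) = normTmul (gm1I G g) := rfl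

lemma abToCoinv_toAbLinear (b : (augI G).restrictScalars ℤ) :
    abToCoinv (toAbLinear (b : ℤ[G])) = normTmul b := by
  have hb : b ∈ Submodule.span ℤ (Set.range (gm1I G)) := by
    rw [span_gm1I_eq_top]; exact Submodule.mem_top
  induction hb using Submodule.span_induction with
  | mem x hx =>
    obtain ⟨g, rfl⟩ := hx
    rw [toAbLinear_gm1I, abToCoinv_of]
  | zero => simp
  | add x y _ _ hx hy => simp [hx, hy]
  | smul n x _ hx => rw [Submodule.coe_smul, map_smul, map_zsmul, hx, map_zsmul]

lemma two_smul_abToCoinv (x : Additive (Abelianization G)) : (2 : ℤ) • abToCoinv x = 0 := by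
  obtain ⟨g, rfl⟩ := ofMul_abelianization_of_surjective x
  exact two_smul_normTmul _

noncomputable def coinvOfAbTensor :
    Additive (Abelianization G) ⊗[ℤ] ZMod 2 →+ Coinv (tensorRep G) :=
  liftTensorZMod 2 abToCoinv (by exact_mod_cast two_smul_abToCoinv)

lemma coinvOfAbTensor_ofMul_tmul_one (g : G) :
    coinvOfAbTensor (Additive.ofMul (Abelianization.of g) ⊗ₜ 1) = normTmul (gm1I G g) :=
  liftTensorZMod_tmul_one _ _ _ _

lemma coinvToAbTensor_normTmul (b : (augI G).restrictScalars ℤ) :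
    coinvToAbTensor (normTmul b) = toAbLinear (b : ℤ[G]) ⊗ₜ 1 := by
  rw [normTmul_apply, coinvToAbTensor_mk, tensorToAbTensor_tmul, coeffOneModTwo_apply, NeltN2,
    Nelt_coeff, Int.cast_one]

lemma coinvOfAbTensor_coinvToAbTensor {q : Coinv (tensorRep G)}
    (hq : q ∈ LinearMap.range normTmul) : coinvOfAbTensor (coinvToAbTensor q) = q := by
  obtain ⟨b, rfl⟩ := hq
  rw [coinvToAbTensor_normTmul, coinvOfAbTensor, liftTensorZMod_tmul_one, abToCoinv_toAbLinear]

lemma coinvToAbTensor_coinvOfAbTensor (t : Additive (Abelianization G) ⊗[ℤ] ZMod 2) :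
    coinvToAbTensor (coinvOfAbTensor t) = t := by
  induction t with
  | zero => rw [map_zero, map_zero]
  | add t t' ht ht' => rw [map_add, map_add, ht, ht']
  | tmul x c =>
    obtain ⟨g, rfl⟩ := ofMul_abelianization_of_surjective x
    obtain ⟨n, rfl⟩ := ZMod.intCast_surjective c
    rw [tmul_intCast, map_zsmul, map_zsmul, coinvOfAbTensor_ofMul_tmul_one,
      coinvToAbTensor_normTmul, toAbLinear_gm1I]

lemma coinvOfAbTensor_mem_range (t : Additive (Abelianization G) ⊗[ℤ] ZMod 2) :
    coinvOfAbTensor t ∈ LinearMap.range normTmul := by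
  induction t with
  | zero => rw [map_zero]; exact zero_mem _
  | add t t' ht ht' => rw [map_add]; exact add_mem ht ht'
  | tmul x c =>
    obtain ⟨g, rfl⟩ := ofMul_abelianization_of_surjective x
    obtain ⟨n, rfl⟩ := ZMod.intCast_surjective c
    rw [tmul_intCast, map_zsmul, coinvOfAbTensor_ofMul_tmul_one]
    exact zsmul_mem (LinearMap.mem_range_self normTmul _) n

noncomputable def abTensorEquivKerNormBar :
    Additive (Abelianization G) ⊗[ℤ] ZMod 2 ≃+ LinearMap.ker (normBar (tensorRep G)) where
  toFun t := ⟨coinvOfAbTensor t, by rw [ker_normBar]; exact coinvOfAbTensor_mem_range t⟩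
  invFun q := coinvToAbTensor (q : Coinv (tensorRep G))
  left_inv := coinvToAbTensor_coinvOfAbTensor
  right_inv q := Subtype.ext (coinvOfAbTensor_coinvToAbTensor (by rw [← ker_normBar]; exact q.2))
  map_add' t t' := Subtype.ext (map_add coinvOfAbTensor t t')

end Inverse

/-- For a finite group `G`, the Tate homology group `Ĥ₀(G; (N,2) ⊗_ℤ I)` (the
kernel of the norm map on the coinvariants, with the diagonal `G`-action on the tensor product)
is isomorphic to `G^{ab} ⊗_ℤ ℤ/2` via the map sending `g ⊗ 1` to the class of `N ⊗ (g - 1)`. -/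
theorem stmt13 {G : Type*} [Group G] [Fintype G] :
    ∃ e : (Additive (Abelianization G)) ⊗[ℤ] (ZMod 2) ≃+
        ↥(LinearMap.ker (normBar ((idealRep G (N2 G)).tprod (idealRep G (augI G))))),
      ∀ g : G,
        ((e ((Additive.ofMul (Abelianization.of g)) ⊗ₜ[ℤ] (1 : ZMod 2)) :
            ↥(LinearMap.ker (normBar ((idealRep G (N2 G)).tprod (idealRep G (augI G)))))) :
          Coinv ((idealRep G (N2 G)).tprod (idealRep G (augI G)))) =
        Submodule.Quotient.mk ((NeltN2 G) ⊗ₜ[ℤ] (gm1I G g)) :=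
  ⟨abTensorEquivKerNormBar, coinvOfAbTensor_ofMul_tmul_one⟩
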